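/- Let c₂ = ∑_{l=1}^∞ 2^{−l}·l·ln l, p†_d(l) = 2^{−l}·(1 + d(l·ln l − c₂·l/2)), and p*(l) = 2^{−l} for l ≥ 1. For every ε > 0 there exist d₀ > 0 and κ < ∞ such that for all 0 < d < d₀: | D(p†_d ‖ p*) − (d²/(2 ln 2))·( (3/2)·c₂² + ∑_{l≥1} 2^{−l}(l ln l)² − c₂·∑_{l≥1} 2^{−l} l² ln l ) | ≤ κ·d^{3−ε}. -/

import Mathlib

/-- `c₂ = ∑_{l≥1} 2^{-l} l ln l`. -/
noncomputable def c2 : ℝ := ∑' l : ℕ+, (2 : ℝ) ^ (-((l : ℕ) : ℤ)) * (l : ℝ) * Real.log (l : ℝ)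

/-- The near-optimal run-length distribution
`p†_d(l) = 2^{-l}(1 + d(l ln l - c₂ l / 2))`. -/
noncomputable def pdag (d : ℝ) (l : ℕ+) : ℝ :=
  (2 : ℝ) ^ (-((l : ℕ) : ℤ)) * (1 + d * ((l : ℝ) * Real.log (l : ℝ) - c2 * (l : ℝ) / 2))

/-!
Write `p†_d(l) = 2^{-l} (1 + d f(l))` with `f = tilt`. Then `D(p†_d‖p*)` is `(ln 2)⁻¹` times
`∑ 2^{-l} φ(d f(l))`, where `φ(x) = (1 + x) ln (1 + x) = x + x²/2 + O(|x|³)` uniformly on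
`x ≥ -1/2`. The linear term vanishes since `∑ 2^{-l} f(l) = c₂ - (c₂/2) ∑ 2^{-l} l = 0`, the
quadratic term is the `d²` coefficient once `∑ 2^{-l} l² = 6` is used, and the remainder is
`O(d³)` because `f` is bounded below (so `d f ≥ -1/2` for small `d`) and `∑ 2^{-l} |f(l)|³ < ∞`.
-/

open Real

theorem two_zpow_neg_natCast (n : ℕ) : (2 : ℝ) ^ (-(n : ℤ)) = 2⁻¹ ^ n := by
  rw [zpow_neg, zpow_natCast, inv_pow]

theorem summable_pnat_two_zpow_neg_mul_of_abs_le {g : ℕ → ℝ} {C : ℝ} {k : ℕ}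
    (h : ∀ n, |g n| ≤ C * n ^ k) :
    Summable fun l : ℕ+ ↦ (2 : ℝ) ^ (-((l : ℕ) : ℤ)) * g l := by
  refine Summable.comp_injective (f := fun n : ℕ ↦ (2 : ℝ) ^ (-(n : ℤ)) * g n) ?_
    PNat.coe_injective
  refine .of_norm_bounded ((summable_pow_mul_geometric_of_norm_lt_one k
    (r := (2⁻¹ : ℝ)) (by norm_num)).mul_left C) fun n ↦ ?_
  rw [Real.norm_eq_abs, abs_mul, two_zpow_neg_natCast, abs_of_pos (by positivity), mul_comm]
  calc |g n| * 2⁻¹ ^ n ≤ C * n ^ k * 2⁻¹ ^ n := by gcongr; exact h n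
    _ = C * (n ^ k * 2⁻¹ ^ n) := by ring

theorem hasSum_sq_mul_geometric_two_inv : HasSum (fun n : ℕ ↦ (n : ℝ) ^ 2 * 2⁻¹ ^ n) 6 := by
  have hr : ‖(2⁻¹ : ℝ)‖ < 1 := by norm_num
  have h2 := hasSum_choose_mul_geometric_of_norm_lt_one 2 hr
  have h1 := hasSum_coe_mul_geometric_of_norm_lt_one hr
  have h0 := hasSum_geometric_of_lt_one (r := (2⁻¹ : ℝ)) (by norm_num) (by norm_num)
  convert! ((h2.mul_left 2).sub (h1.mul_left 3)).sub (h0.mul_left 2) using 1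
  · ext n
    -- `n² = 2 (n + 2).choose 2 - 3 n - 2`
    push_cast [Nat.cast_choose_two]
    ring
  · norm_num

theorem tsum_pnat_two_zpow_neg_mul_self :
    ∑' l : ℕ+, (2 : ℝ) ^ (-((l : ℕ) : ℤ)) * (l : ℝ) = 2 := by
  rw [tsum_pnat_eq_tsum_of_eq_zero (f := fun n : ℕ ↦ (2 : ℝ) ^ (-(n : ℤ)) * n) (by simp)]
  simp_rw [two_zpow_neg_natCast, mul_comm _ (_ : ℝ)]
  rw [tsum_coe_mul_geometric_of_norm_lt_one (by norm_num)]
  norm_num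

theorem tsum_pnat_two_zpow_neg_mul_sq :
    ∑' l : ℕ+, (2 : ℝ) ^ (-((l : ℕ) : ℤ)) * (l : ℝ) ^ 2 = 6 := by
  rw [tsum_pnat_eq_tsum_of_eq_zero (f := fun n : ℕ ↦ (2 : ℝ) ^ (-(n : ℤ)) * n ^ 2) (by simp)]
  simp_rw [two_zpow_neg_natCast, mul_comm _ ((_ : ℝ) ^ 2)]
  exact hasSum_sq_mul_geometric_two_inv.tsum_eq

theorem abs_log_natCast_le (n : ℕ) : |log n| ≤ n := by
  rw [abs_of_nonneg (log_natCast_nonneg n)]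
  exact log_le_self n.cast_nonneg

theorem summable_pnat_two_zpow_neg_mul_pow_mul_log_pow (a b : ℕ) :
    Summable fun l : ℕ+ ↦ (2 : ℝ) ^ (-((l : ℕ) : ℤ)) * ((l : ℝ) ^ a * log (l : ℝ) ^ b) := by
  refine summable_pnat_two_zpow_neg_mul_of_abs_le (g := fun n ↦ (n : ℝ) ^ a * log n ^ b)
    (C := 1) (k := a + b) fun n ↦ ?_
  rw [abs_mul, abs_pow, abs_pow, Nat.abs_cast, one_mul, pow_add]
  gcongr
  exact abs_log_natCast_le n

theorem neg_exp_sub_one_le_mul_log_sub_mul (a : ℝ) {x : ℝ} (hx : 0 ≤ x) :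
    -exp (a - 1) ≤ x * log x - a * x := by
  rcases hx.eq_or_lt with rfl | hx
  · simp [(exp_pos _).le]
  · have h := one_sub_inv_le_log_of_pos (div_pos hx (exp_pos (a - 1)))
    rw [log_div hx.ne' (exp_pos _).ne', log_exp, inv_div] at h
    have h' := mul_le_mul_of_nonneg_left h hx.le
    rw [mul_sub, mul_one, mul_div_cancel₀ _ hx.ne'] at h'
    nlinarith

theorem abs_one_add_mul_log_one_add_sub_le_of_abs_le {x : ℝ} (hx : |x| ≤ 2⁻¹) :
    |(1 + x) * log (1 + x) - (x + x ^ 2 / 2)| ≤ 4 * |x| ^ 3 := by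
  set E := log (1 + x) - (x - x ^ 2 / 2) with hEdef
  have hE : |E| ≤ 2 * |x| ^ 3 := by
    have h := abs_log_sub_add_sum_range_le (x := -x) (by rw [abs_neg]; linarith) 2
    norm_num [Finset.sum_range_succ] at h
    rw [show -x + x ^ 2 / 2 + log (1 + x) = E by rw [hEdef]; ring,
      le_div_iff₀ (by linarith)] at h
    nlinarith [abs_nonneg E, pow_nonneg (abs_nonneg x) 3]
  have h1x : |1 + x| ≤ 3 / 2 := (abs_add_le _ _).trans (by norm_num; linarith)
  calc |(1 + x) * log (1 + x) - (x + x ^ 2 / 2)| = |(1 + x) * E - x ^ 3 / 2| := by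
        rw [hEdef]; ring_nf
    _ ≤ 3 / 2 * (2 * |x| ^ 3) + |x| ^ 3 / 2 := by
        refine (abs_sub _ _).trans (add_le_add ?_ (by simp [abs_div, abs_pow]))
        rw [abs_mul]
        exact mul_le_mul h1x hE (abs_nonneg _) (by norm_num)
    _ ≤ 4 * |x| ^ 3 := by nlinarith [pow_nonneg (abs_nonneg x) 3]

theorem abs_one_add_mul_log_one_add_sub_le_of_le {x : ℝ} (hx : 2⁻¹ ≤ x) :
    |(1 + x) * log (1 + x) - (x + x ^ 2 / 2)| ≤ 6 * |x| ^ 3 := by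
  have hlog0 : 0 ≤ log (1 + x) := log_nonneg (by linarith)
  have hlog : log (1 + x) ≤ x := by linarith [log_le_sub_one_of_pos (by linarith : 0 < 1 + x)]
  rw [abs_of_pos (by linarith : 0 < x), abs_le]
  constructor <;> nlinarith [mul_nonneg (by linarith : (0:ℝ) ≤ 1 + x) hlog0,
    mul_le_mul_of_nonneg_left hlog (by linarith : (0:ℝ) ≤ 1 + x)]

theorem abs_one_add_mul_log_one_add_sub_le {x : ℝ} (hx : -2⁻¹ ≤ x) :
    |(1 + x) * log (1 + x) - (x + x ^ 2 / 2)| ≤ 6 * |x| ^ 3 := by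
  rcases le_or_gt |x| 2⁻¹ with h | h
  · exact (abs_one_add_mul_log_one_add_sub_le_of_abs_le h).trans
      (by nlinarith [pow_nonneg (abs_nonneg x) 3])
  · exact abs_one_add_mul_log_one_add_sub_le_of_le (by cases abs_cases x <;> linarith)

theorem abs_tsum_mul_one_add_mul_log_sub_le {ι : Type*} {w f : ι → ℝ} {d : ℝ}
    (hw : ∀ i, 0 ≤ w i) (hdf : ∀ i, -2⁻¹ ≤ d * f i)
    (hf : Summable fun i ↦ w i * f i) (hmean : ∑' i, w i * f i = 0)
    (hf2 : Summable fun i ↦ w i * f i ^ 2) (hf3 : Summable fun i ↦ w i * |f i| ^ 3) :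
    |∑' i, w i * ((1 + d * f i) * log (1 + d * f i)) - d ^ 2 / 2 * ∑' i, w i * f i ^ 2| ≤
      6 * |d| ^ 3 * ∑' i, w i * |f i| ^ 3 := by
  set r : ι → ℝ := fun i ↦ (1 + d * f i) * log (1 + d * f i) - (d * f i + (d * f i) ^ 2 / 2)
    with hr
  have hwr : ∀ i, ‖w i * r i‖ ≤ 6 * |d| ^ 3 * (w i * |f i| ^ 3) := fun i ↦ by
    rw [Real.norm_eq_abs, abs_mul, abs_of_nonneg (hw i)]
    calc w i * |r i| ≤ w i * (6 * |d * f i| ^ 3) :=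
          mul_le_mul_of_nonneg_left (abs_one_add_mul_log_one_add_sub_le (hdf i)) (hw i)
      _ = 6 * |d| ^ 3 * (w i * |f i| ^ 3) := by rw [abs_mul]; ring
  have hsum_r : Summable fun i ↦ w i * r i := .of_norm_bounded (hf3.mul_left _) hwr
  have hsplit : ∑' i, w i * ((1 + d * f i) * log (1 + d * f i)) =
      d * ∑' i, w i * f i + d ^ 2 / 2 * ∑' i, w i * f i ^ 2 + ∑' i, w i * r i := by
    rw [← tsum_mul_left, ← tsum_mul_left, ← (hf.mul_left d).tsum_add (hf2.mul_left _),
      ← ((hf.mul_left d).add (hf2.mul_left _)).tsum_add hsum_r]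
    congr 1 with i
    simp only [hr]
    ring
  rw [hsplit, hmean, mul_zero, zero_add, add_sub_cancel_left, ← Real.norm_eq_abs]
  exact tsum_of_norm_bounded (hf3.hasSum.mul_left _) hwr

noncomputable def tilt (n : ℕ) : ℝ := n * log n - c2 * n / 2

theorem pdag_eq (d : ℝ) (l : ℕ+) : pdag d l = (2 : ℝ) ^ (-((l : ℕ) : ℤ)) * (1 + d * tilt l) :=
  rfl

theorem neg_exp_le_tilt (n : ℕ) : -exp (c2 / 2 - 1) ≤ tilt n := by
  have h := neg_exp_sub_one_le_mul_log_sub_mul (c2 / 2) n.cast_nonneg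
  rw [tilt]
  linarith

theorem abs_tilt_le (n : ℕ) : |tilt n| ≤ (1 + |c2| / 2) * n ^ 2 := by
  have hn : (n : ℝ) ≤ n ^ 2 := by
    rcases n.eq_zero_or_pos with rfl | hn
    · simp
    · nlinarith [(Nat.one_le_cast (α := ℝ)).2 hn]
  have hlog : |(n : ℝ) * log n| ≤ n ^ 2 := by
    rw [abs_mul, Nat.abs_cast, sq]
    exact mul_le_mul_of_nonneg_left (abs_log_natCast_le n) n.cast_nonneg
  have hlin : |c2 * n / 2| ≤ |c2| / 2 * n ^ 2 := by
    rw [abs_div, abs_mul, Nat.abs_cast, abs_two, mul_div_right_comm]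
    exact mul_le_mul_of_nonneg_left hn (by positivity)
  calc |tilt n| ≤ |(n : ℝ) * log n| + |c2 * n / 2| := abs_sub _ _
    _ ≤ (1 + |c2| / 2) * n ^ 2 := by linarith

theorem summable_abs_tilt_pow (k : ℕ) :
    Summable fun l : ℕ+ ↦ (2 : ℝ) ^ (-((l : ℕ) : ℤ)) * |tilt l| ^ k := by
  refine summable_pnat_two_zpow_neg_mul_of_abs_le (g := fun n ↦ |tilt n| ^ k)
    (C := (1 + |c2| / 2) ^ k) (k := 2 * k) fun n ↦ ?_
  rw [abs_pow, abs_abs, pow_mul, ← mul_pow]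
  exact pow_le_pow_left₀ (abs_nonneg _) (abs_tilt_le n) k

theorem summable_tilt_pow (k : ℕ) :
    Summable fun l : ℕ+ ↦ (2 : ℝ) ^ (-((l : ℕ) : ℤ)) * tilt l ^ k :=
  .of_norm <| by simpa [abs_mul, abs_pow] using summable_abs_tilt_pow k

theorem tsum_tilt : ∑' l : ℕ+, (2 : ℝ) ^ (-((l : ℕ) : ℤ)) * tilt l = 0 := by
  have hc2 : HasSum (fun l : ℕ+ ↦ (2 : ℝ) ^ (-((l : ℕ) : ℤ)) * (l : ℝ) * log (l : ℝ)) c2 := by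
    rw [c2]
    simpa only [pow_one, mul_assoc] using
      (summable_pnat_two_zpow_neg_mul_pow_mul_log_pow 1 1).hasSum
  have hmean : HasSum (fun l : ℕ+ ↦ (2 : ℝ) ^ (-((l : ℕ) : ℤ)) * (l : ℝ)) 2 := by
    have h := (summable_pnat_two_zpow_neg_mul_pow_mul_log_pow 1 0).hasSum
    simp only [pow_one, pow_zero, mul_one] at h
    rwa [tsum_pnat_two_zpow_neg_mul_self] at h
  calc ∑' l : ℕ+, (2 : ℝ) ^ (-((l : ℕ) : ℤ)) * tilt l
      = ∑' l : ℕ+, ((2 : ℝ) ^ (-((l : ℕ) : ℤ)) * (l : ℝ) * log (l : ℝ) -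
          c2 / 2 * ((2 : ℝ) ^ (-((l : ℕ) : ℤ)) * (l : ℝ))) :=
        tsum_congr fun l ↦ by rw [tilt]; ring
    _ = c2 - c2 / 2 * 2 := (hc2.sub (hmean.mul_left _)).tsum_eq
    _ = 0 := by ring

theorem tsum_tilt_sq : ∑' l : ℕ+, (2 : ℝ) ^ (-((l : ℕ) : ℤ)) * tilt l ^ 2 =
    (3 / 2) * c2 ^ 2 +
      (∑' l : ℕ+, (2 : ℝ) ^ (-((l : ℕ) : ℤ)) * ((l : ℝ) * Real.log (l : ℝ)) ^ 2) -
      c2 * (∑' l : ℕ+, (2 : ℝ) ^ (-((l : ℕ) : ℤ)) * (l : ℝ) ^ 2 * Real.log (l : ℝ)) := by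
  have hQ : Summable fun l : ℕ+ ↦ (2 : ℝ) ^ (-((l : ℕ) : ℤ)) * ((l : ℝ) * log (l : ℝ)) ^ 2 := by
    simpa only [mul_pow] using summable_pnat_two_zpow_neg_mul_pow_mul_log_pow 2 2
  have hP : Summable fun l : ℕ+ ↦ (2 : ℝ) ^ (-((l : ℕ) : ℤ)) * (l : ℝ) ^ 2 * log (l : ℝ) := by
    simpa only [pow_one, mul_assoc] using summable_pnat_two_zpow_neg_mul_pow_mul_log_pow 2 1
  have hsq : HasSum (fun l : ℕ+ ↦ (2 : ℝ) ^ (-((l : ℕ) : ℤ)) * (l : ℝ) ^ 2) 6 := by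
    have h := (summable_pnat_two_zpow_neg_mul_pow_mul_log_pow 2 0).hasSum
    simp only [pow_zero, mul_one] at h
    rwa [tsum_pnat_two_zpow_neg_mul_sq] at h
  calc ∑' l : ℕ+, (2 : ℝ) ^ (-((l : ℕ) : ℤ)) * tilt l ^ 2
      = ∑' l : ℕ+, ((2 : ℝ) ^ (-((l : ℕ) : ℤ)) * ((l : ℝ) * log (l : ℝ)) ^ 2 -
          c2 * ((2 : ℝ) ^ (-((l : ℕ) : ℤ)) * (l : ℝ) ^ 2 * log (l : ℝ)) +
          c2 ^ 2 / 4 * ((2 : ℝ) ^ (-((l : ℕ) : ℤ)) * (l : ℝ) ^ 2)) :=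
        tsum_congr fun l ↦ by rw [tilt]; ring
    _ = _ := ((hQ.hasSum.sub (hP.hasSum.mul_left c2)).add (hsq.mul_left _)).tsum_eq
    _ = _ := by ring

theorem tsum_pdag_mul_logb (d : ℝ) :
    ∑' l : ℕ+, pdag d l * logb 2 (pdag d l / (2 : ℝ) ^ (-((l : ℕ) : ℤ))) =
      (∑' l : ℕ+, (2 : ℝ) ^ (-((l : ℕ) : ℤ)) *
        ((1 + d * tilt l) * log (1 + d * tilt l))) / log 2 := by
  rw [← tsum_div_const]
  refine tsum_congr fun l ↦ ?_
  rw [pdag_eq, mul_div_cancel_left₀ _ (by positivity), logb]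
  ring

/-- Second-order expansion of the KL divergence (in bits) between `p†_d` and the
geometric distribution `p*(l) = 2^{-l}`:
`D(p†_d‖p*) = (d²/(2 ln 2))·((3/2)c₂² + ∑ 2^{-l}(l ln l)² − c₂ ∑ 2^{-l} l² ln l) + O(d^{3-ε})`. -/
theorem stmt_12 :
    ∀ ε : ℝ, 0 < ε →
      ∃ d₀ : ℝ, 0 < d₀ ∧ ∃ κ : ℝ,
        ∀ d : ℝ, 0 < d → d < d₀ →
          |(∑' l : ℕ+, pdag d l * Real.logb 2 (pdag d l / (2 : ℝ) ^ (-((l : ℕ) : ℤ)))) -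
              d ^ 2 / (2 * Real.log 2) *
                ((3 / 2) * c2 ^ 2 +
                  (∑' l : ℕ+,
                    (2 : ℝ) ^ (-((l : ℕ) : ℤ)) * ((l : ℝ) * Real.log (l : ℝ)) ^ 2) -
                  c2 * (∑' l : ℕ+,
                    (2 : ℝ) ^ (-((l : ℕ) : ℤ)) * (l : ℝ) ^ 2 * Real.log (l : ℝ)))| ≤
            κ * d ^ (3 - ε) := by
  intro ε hε
  set B := exp (c2 / 2 - 1)
  set K := ∑' l : ℕ+, (2 : ℝ) ^ (-((l : ℕ) : ℤ)) * |tilt l| ^ 3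
  have hlog2 : 0 < log 2 := log_pos one_lt_two
  refine ⟨min 1 (B⁻¹ / 2), by positivity, 6 * K / log 2, fun d hd hd₀ ↦ ?_⟩
  have hd1 : d ≤ 1 := hd₀.le.trans (min_le_left _ _)
  have hdB : d * B ≤ 2⁻¹ :=
    calc d * B ≤ B⁻¹ / 2 * B := by gcongr; exact hd₀.le.trans (min_le_right _ _)
      _ = 2⁻¹ := by rw [div_mul_eq_mul_div, inv_mul_cancel₀ (exp_pos _).ne', one_div]
  have hdf : ∀ l : ℕ+, -2⁻¹ ≤ d * tilt l := fun l ↦ by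
    nlinarith [neg_exp_le_tilt l]
  have hrem := abs_tsum_mul_one_add_mul_log_sub_le (fun l ↦ by positivity) hdf
    (by simpa using summable_tilt_pow 1) tsum_tilt (summable_tilt_pow 2) (summable_abs_tilt_pow 3)
  have hd3 : d ^ 3 ≤ d ^ (3 - ε) := by
    rw [← rpow_natCast]
    exact rpow_le_rpow_of_exponent_ge hd hd1 (by push_cast; linarith)
  have hdiv (A S : ℝ) : A / log 2 - d ^ 2 / (2 * log 2) * S = (A - d ^ 2 / 2 * S) / log 2 := by
    ring
  rw [abs_of_pos hd] at hrem
  rw [tsum_pdag_mul_logb, ← tsum_tilt_sq, hdiv, abs_div, abs_of_pos hlog2]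
  calc _ ≤ 6 * d ^ 3 * K / log 2 := by gcongr
    _ = 6 * K / log 2 * d ^ 3 := by ring
    _ ≤ 6 * K / log 2 * d ^ (3 - ε) := by gcongr
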